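/- arXiv:1410.4319 — 4 statements merged into one kernel-verified Lean document; each statement's English description precedes it below -/
import Mathlib

section
/- Let f: ℂ^N → ℝ be defined by f(u) = ln det(T(u) + εI) + g(u) where g is any function, and suppose at each iteration u_{j+1} minimizes u ↦ tr((T(u_j)+εI)⁻¹ T(u)) + g(u) over a feasible set containing u_j. Then f(u_{j+1}) ≤ f(u_j), i.e., the objective is non-increasing along the iterates. -/
open Matrix ComplexOrder

/-- The Hermitian Toeplitz matrix whose first row is the transpose of `u`. -/
def Toep (N : ℕ) (u : Fin N → ℂ) : Matrix (Fin N) (Fin N) ℂ :=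
  Matrix.of fun j k =>
    if (j : ℕ) ≤ (k : ℕ) then
      u ⟨(k : ℕ) - (j : ℕ), lt_of_le_of_lt (Nat.sub_le _ _) k.isLt⟩
    else
      (starRingEnd ℂ) (u ⟨(j : ℕ) - (k : ℕ), lt_of_le_of_lt (Nat.sub_le _ _) j.isLt⟩)

/-!
`log det` is concave on positive definite matrices, so it lies below its tangent plane at
`A = T(u_j) + εI`: `log det B ≤ log det A + tr(A⁻¹ (B - A))`. Hence `tr(A⁻¹ T(u)) + g(u)`, shifted by
the constant `log det A - tr(A⁻¹ T(u_j))`, majorizes `f` and touches it at `u_j`; minimizing it can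
only decrease `f`. The tangent inequality is `log x ≤ x - 1` applied to the eigenvalues of
`A^{-1/2} B A^{-1/2}`.
-/

namespace Matrix.PosDef

variable {n 𝕜 : Type*} [Fintype n] [DecidableEq n] [RCLike 𝕜]

open RCLike

lemma log_re_det_le_re_trace_sub_card {C : Matrix n n 𝕜} (hC : C.PosDef) :
    Real.log (re C.det) ≤ re C.trace - Fintype.card n := by
  have hpos := hC.eigenvalues_pos
  rw [hC.1.det_eq_prod_eigenvalues, hC.1.trace_eq_sum_eigenvalues, ← ofReal_prod, ← ofReal_sum,
    ofReal_re, ofReal_re, Real.log_prod fun i _ ↦ (hpos i).ne']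
  calc ∑ i, Real.log (hC.1.eigenvalues i) ≤ ∑ i, (hC.1.eigenvalues i - 1) :=
        Finset.sum_le_sum fun i _ ↦ Real.log_le_sub_one_of_pos (hpos i)
    _ = ∑ i, hC.1.eigenvalues i - Fintype.card n := by simp

open scoped MatrixOrder in
lemma log_re_det_le_add_re_trace_inv_mul_sub {A B : Matrix n n 𝕜} (hA : A.PosDef)
    (hB : B.PosDef) :
    Real.log (re B.det) ≤ Real.log (re A.det) + re (A⁻¹ * (B - A)).trace := by
  set S := CFC.sqrt A⁻¹
  have hSS : S * S = A⁻¹ := CFC.sqrt_mul_sqrt_self _ hA.inv.posSemidef.nonneg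
  have hSH : Sᴴ = S := (CFC.sqrt_nonneg A⁻¹).posSemidef.1
  have hSunit : IsUnit S := by
    rw [isUnit_iff_isUnit_det, ← isUnit_mul_self_iff, ← det_mul, hSS]
    exact hA.inv.det_pos.ne'.isUnit
  have hC : (S * B * S).PosDef := by
    have := hB.conjTranspose_mul_mul_same (mulVec_injective_iff_isUnit.2 hSunit)
    rwa [hSH] at this
  have htrace : (S * B * S).trace = (A⁻¹ * B).trace := by
    rw [trace_mul_comm, ← Matrix.mul_assoc, hSS]
  have hdet : (S * B * S).det = B.det / A.det := by
    rw [det_mul, det_mul, mul_right_comm, ← det_mul, hSS, det_nonsing_inv, Ring.inverse_eq_inv',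
      div_eq_inv_mul]
  obtain ⟨a, ha, hAa⟩ := pos_iff_exists_ofReal.1 hA.det_pos
  obtain ⟨b, hb, hBb⟩ := pos_iff_exists_ofReal.1 hB.det_pos
  have key := hC.log_re_det_le_re_trace_sub_card
  rw [hdet, htrace, ← hAa, ← hBb, ← ofReal_div, ofReal_re,
    Real.log_div hb.ne' ha.ne'] at key
  rw [← hAa, ← hBb, ofReal_re, ofReal_re, Matrix.mul_sub, trace_sub, map_sub,
    nonsing_inv_mul _ hA.det_pos.ne'.isUnit, trace_one, natCast_re]
  linarith

end Matrix.PosDef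

theorem mm_iterates_monotone_general (N : ℕ) (ε : ℝ)
    (g : (Fin N → ℂ) → ℝ) (D : Set (Fin N → ℂ)) (u : ℕ → (Fin N → ℂ))
    (hmem : ∀ j, u j ∈ D)
    (hpd : ∀ j, (Toep N (u j) + ε • (1 : Matrix (Fin N) (Fin N) ℂ)).PosDef)
    (hmin : ∀ j, ∀ v ∈ D,
      ((Toep N (u j) + ε • (1 : Matrix (Fin N) (Fin N) ℂ))⁻¹
          * Toep N (u (j+1))).trace.re + g (u (j+1))
        ≤ ((Toep N (u j) + ε • (1 : Matrix (Fin N) (Fin N) ℂ))⁻¹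
          * Toep N v).trace.re + g v) :
    ∀ j,
      Real.log ((Toep N (u (j+1)) + ε • (1 : Matrix (Fin N) (Fin N) ℂ)).det.re)
          + g (u (j+1))
        ≤ Real.log ((Toep N (u j) + ε • (1 : Matrix (Fin N) (Fin N) ℂ)).det.re)
          + g (u j) := by
  intro j
  have tangent := (hpd j).log_re_det_le_add_re_trace_inv_mul_sub (hpd (j + 1))
  rw [add_sub_add_right_eq_sub, Matrix.mul_sub, trace_sub, map_sub] at tangent
  simp only [RCLike.re_to_complex] at tangent
  linarith [hmin j (u j) (hmem j)]

theorem mm_iterates_monotone (N : ℕ) (ε : ℝ) (hε : 0 < ε)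
    (g : (Fin N → ℂ) → ℝ) (D : Set (Fin N → ℂ)) (u : ℕ → (Fin N → ℂ))
    (hmem : ∀ j, u j ∈ D)
    (hpd : ∀ j, (Toep N (u j) + ε • (1 : Matrix (Fin N) (Fin N) ℂ)).PosDef)
    (hmin : ∀ j, ∀ v ∈ D,
      ((Toep N (u j) + ε • (1 : Matrix (Fin N) (Fin N) ℂ))⁻¹
          * Toep N (u (j+1))).trace.re + g (u (j+1))
        ≤ ((Toep N (u j) + ε • (1 : Matrix (Fin N) (Fin N) ℂ))⁻¹
          * Toep N v).trace.re + g v) :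
    ∀ j,
      Real.log ((Toep N (u (j+1)) + ε • (1 : Matrix (Fin N) (Fin N) ℂ)).det.re)
          + g (u (j+1))
        ≤ Real.log ((Toep N (u j) + ε • (1 : Matrix (Fin N) (Fin N) ℂ)).det.re)
          + g (u j) :=
  mm_iterates_monotone_general N ε g D u hmem hpd hmin
end

section
/- Let T be a Hermitian positive semidefinite N×N matrix and y ∈ ℂ^N. The condition inf{ y^H (T + δI)⁻¹ y : δ > 0 } < ∞ holds if and only if y lies in the column space (range) of T. -/
open Matrix ComplexOrder

theorem quadform_bounded_iff_range (N : ℕ) (T : Matrix (Fin N) (Fin N) ℂ)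
    (hT : T.PosSemidef) (y : Fin N → ℂ) :
    (∃ C : ℝ, ∀ δ : ℝ, 0 < δ →
        (star y ⬝ᵥ ((T + δ • (1 : Matrix (Fin N) (Fin N) ℂ))⁻¹ *ᵥ y)).re ≤ C)
      ↔ ∃ x : Fin N → ℂ, T *ᵥ x = y := by
  classical
  have hH : T.IsHermitian := hT.1
  set U : Matrix (Fin N) (Fin N) ℂ := (hH.eigenvectorUnitary : Matrix (Fin N) (Fin N) ℂ) with hUdef
  set lam : Fin N → ℝ := hH.eigenvalues with hlamdef
  have hlam0 : ∀ i, 0 ≤ lam i := fun i => hT.eigenvalues_nonneg i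
  have hUU : U * star U = 1 := Matrix.mem_unitaryGroup_iff.mp hH.eigenvectorUnitary.2
  have hUU' : star U * U = 1 := Matrix.mem_unitaryGroup_iff'.mp hH.eigenvectorUnitary.2
  have hspec : T = U * diagonal (fun i => ((lam i : ℝ) : ℂ)) * star U := hH.spectral_theorem
  set c : Fin N → ℂ := star U *ᵥ y with hcdef
  have hyc : U *ᵥ c = y := by
    rw [hcdef, mulVec_mulVec, hUU, one_mulVec]
  -- key computation of the quadratic form
  have hkey : ∀ δ : ℝ, 0 < δ →
      (star y ⬝ᵥ ((T + δ • (1 : Matrix (Fin N) (Fin N) ℂ))⁻¹ *ᵥ y)).re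
        = ∑ i, (lam i + δ)⁻¹ * Complex.normSq (c i) := by
    intro δ hδ
    have hne : ∀ i, (((lam i + δ : ℝ) : ℂ)) ≠ 0 := by
      intro i
      have : (0:ℝ) < lam i + δ := by have := hlam0 i; linarith
      exact_mod_cast ne_of_gt this
    have hTδ : T + δ • (1 : Matrix (Fin N) (Fin N) ℂ)
        = U * diagonal (fun i => ((lam i + δ : ℝ) : ℂ)) * star U := by
      have h1 : (δ • (1 : Matrix (Fin N) (Fin N) ℂ))
          = U * (δ • (1 : Matrix (Fin N) (Fin N) ℂ)) * star U := by
        rw [mul_smul_comm, mul_one, smul_mul_assoc, hUU]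
      have h2 : diagonal (fun i => ((lam i : ℝ) : ℂ)) + (δ • (1 : Matrix (Fin N) (Fin N) ℂ))
          = diagonal (fun i => ((lam i + δ : ℝ) : ℂ)) := by
        ext i j
        by_cases h : i = j <;>
          simp [h, Matrix.diagonal_apply, Matrix.one_apply, Complex.real_smul]
      calc T + δ • (1 : Matrix (Fin N) (Fin N) ℂ)
          = U * diagonal (fun i => ((lam i : ℝ) : ℂ)) * star U
              + U * (δ • (1 : Matrix (Fin N) (Fin N) ℂ)) * star U := by rw [← h1, ← hspec]
        _ = _ := by rw [← add_mul, ← mul_add, h2]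
    have hinv : (T + δ • (1 : Matrix (Fin N) (Fin N) ℂ))⁻¹
        = U * diagonal (fun i => (((lam i + δ : ℝ) : ℂ))⁻¹) * star U := by
      apply Matrix.inv_eq_right_inv
      rw [hTδ]
      calc (U * diagonal (fun i => ((lam i + δ : ℝ) : ℂ)) * star U)
            * (U * diagonal (fun i => (((lam i + δ : ℝ) : ℂ))⁻¹) * star U)
          = U * (diagonal (fun i => ((lam i + δ : ℝ) : ℂ)) * (star U * U)
              * diagonal (fun i => (((lam i + δ : ℝ) : ℂ))⁻¹)) * star U := by
            simp only [Matrix.mul_assoc]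
        _ = U * (diagonal (fun i => ((lam i + δ : ℝ) : ℂ))
              * diagonal (fun i => (((lam i + δ : ℝ) : ℂ))⁻¹)) * star U := by
            rw [hUU', Matrix.mul_one]
        _ = 1 := by
            rw [Matrix.diagonal_mul_diagonal]
            have : (fun i => ((lam i + δ : ℝ) : ℂ) * (((lam i + δ : ℝ) : ℂ))⁻¹)
                = fun _ => (1 : ℂ) := by
              funext i; exact mul_inv_cancel₀ (hne i)
            rw [this, Matrix.diagonal_one, Matrix.mul_one, hUU]
    have hstarc : star y ᵥ* U = star c := by
      rw [hcdef, Matrix.star_mulVec, Matrix.star_eq_conjTranspose,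
        Matrix.conjTranspose_conjTranspose]
    rw [hinv, ← Matrix.mulVec_mulVec, ← Matrix.mulVec_mulVec, Matrix.dotProduct_mulVec, hstarc,
      ← hcdef]
    have : star c ⬝ᵥ (diagonal (fun i => (((lam i + δ : ℝ) : ℂ))⁻¹) *ᵥ c)
        = ∑ i, (((lam i + δ)⁻¹ * Complex.normSq (c i) : ℝ) : ℂ) := by
      rw [dotProduct]
      refine Finset.sum_congr rfl fun i _ => ?_
      rw [Matrix.mulVec_diagonal]
      have : (star c) i * ((((lam i + δ : ℝ) : ℂ))⁻¹ * c i)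
          = (((lam i + δ : ℝ) : ℂ))⁻¹ * ((starRingEnd ℂ) (c i) * c i) := by
        simp [Pi.star_apply]; ring
      rw [this, ← Complex.normSq_eq_conj_mul_self]
      push_cast
      ring
    rw [this, ← Complex.ofReal_sum, Complex.ofReal_re]
  constructor
  · rintro ⟨C, hC⟩
    have hczero : ∀ i, lam i = 0 → c i = 0 := by
      intro i hli
      by_contra hci
      have hs : 0 < Complex.normSq (c i) := by
        simpa [Complex.normSq_pos] using hci
      set δ : ℝ := Complex.normSq (c i) / (|C| + 1) with hδdef
      have hδ : 0 < δ := div_pos hs (by positivity)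
      have hsum := hC δ hδ
      rw [hkey δ hδ] at hsum
      have hterm : (lam i + δ)⁻¹ * Complex.normSq (c i) ≤ C := by
        refine le_trans ?_ hsum
        refine Finset.single_le_sum (f := fun j => (lam j + δ)⁻¹ * Complex.normSq (c j))
          (fun j _ => ?_) (Finset.mem_univ i)
        have h0 : 0 < lam j + δ := by have := hlam0 j; linarith
        exact mul_nonneg (le_of_lt (inv_pos.mpr h0)) (Complex.normSq_nonneg _)
      rw [hli, zero_add, hδdef] at hterm
      rw [inv_div, div_mul_cancel₀ _ (ne_of_gt hs)] at hterm
      have : C < |C| + 1 := lt_of_le_of_lt (le_abs_self C) (by linarith)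
      linarith
    refine ⟨U *ᵥ (fun i => if lam i = 0 then 0 else ((lam i : ℝ) : ℂ)⁻¹ * c i), ?_⟩
    rw [hspec]
    simp only [Matrix.mulVec_mulVec]
    rw [Matrix.mul_assoc (U * diagonal fun i => ((lam i : ℝ) : ℂ)) (star U) U, hUU',
      Matrix.mul_one, ← hyc, ← Matrix.mulVec_mulVec]
    have hdc : (diagonal fun i => ((lam i : ℝ) : ℂ)) *ᵥ
        (fun i => if lam i = 0 then 0 else ((lam i : ℝ) : ℂ)⁻¹ * c i) = c := by
      funext i
      rw [Matrix.mulVec_diagonal]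
      by_cases h : lam i = 0
      · simp [h, hczero i h]
      · rw [if_neg h, ← mul_assoc, mul_inv_cancel₀ (by exact_mod_cast h), one_mul]
    rw [hdc]
  · rintro ⟨x, hx⟩
    set b : Fin N → ℂ := star U *ᵥ x with hbdef
    have hcb : ∀ i, c i = ((lam i : ℝ) : ℂ) * b i := by
      have : c = diagonal (fun i => ((lam i : ℝ) : ℂ)) *ᵥ b := by
        rw [hcdef, hbdef, ← hx, hspec]
        simp only [Matrix.mulVec_mulVec]
        rw [← Matrix.mul_assoc, ← Matrix.mul_assoc, hUU', Matrix.one_mul]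
      intro i
      rw [this, Matrix.mulVec_diagonal]
    refine ⟨∑ i, lam i * Complex.normSq (b i), fun δ hδ => ?_⟩
    rw [hkey δ hδ]
    refine Finset.sum_le_sum fun i _ => ?_
    rw [hcb i]
    have hns : Complex.normSq (((lam i : ℝ) : ℂ) * b i) = lam i ^ 2 * Complex.normSq (b i) := by
      rw [Complex.normSq_mul, Complex.normSq_ofReal]; ring
    rw [hns]
    have hpos : 0 < lam i + δ := by have := hlam0 i; linarith
    rw [← mul_assoc]
    have h1 : (lam i + δ)⁻¹ * lam i ^ 2 ≤ lam i := by
      rw [inv_mul_le_iff₀ hpos]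
      nlinarith [hlam0 i]
    exact mul_le_mul_of_nonneg_right h1 (Complex.normSq_nonneg _)
end

section
/- Let T(u) be Hermitian PSD Toeplitz with Vandermonde decomposition T(u) = Σ_{k=1}^r p_k a(f_k)a(f_k)^H (p_k > 0, distinct f_k), and suppose the columns of Y ∈ ℂ^{N×L} lie in the range of T(u), so Y = Σ_k a(f_k)s_k for unique rows s_k. Then tr(Y^H T(u)⁻¹ Y) = Σ_{k=1}^r ‖s_k‖₂²/p_k, where T(u)⁻¹ is interpreted as the pseudoinverse when T(u) is rank-deficient. -/
open Matrix ComplexOrder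

/-- The complex sinusoid atom `a(f) = (1, e^{i2πf}, …, e^{i2π(N−1)f})ᵀ`. -/
noncomputable def atom (N : ℕ) (f : ℝ) : Fin N → ℂ :=
  fun n => Complex.exp (Complex.I * (2 * (Real.pi : ℂ) * (f : ℂ) * ((n : ℕ) : ℂ)))

/-- Euclidean (ℓ2) norm of a row coefficient vector. -/
noncomputable def l2 {L : ℕ} (s : Fin L → ℂ) : ℝ := Real.sqrt (∑ j, ‖s j‖ ^ 2)

/-- `tr(Yᴴ T† Y)` for PSD `T`, with `†` the restriction-to-range (pseudo)inverse,
realized as the supremum of the regularized quadratic forms. -/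
noncomputable def qtrace (N L : ℕ) (T : Matrix (Fin N) (Fin N) ℂ)
    (Y : Matrix (Fin N) (Fin L) ℂ) : ℝ :=
  sSup { t : ℝ | ∃ δ : ℝ, 0 < δ ∧
    t = (Yᴴ * (T + δ • (1 : Matrix (Fin N) (Fin N) ℂ))⁻¹ * Y).trace.re }


/-! Write `T = A P Aᴴ` and `Y = A S`, where `A` has the atoms `a(f k)` as columns and
`P = diag p`. `A` has full column rank, because its first `r` rows form the Vandermonde matrix of
the distinct nodes `e^{2πi f k}`. The push-through identity `(A P Aᴴ + δ) A = A P (AᴴA + δ P⁻¹)`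
gives
  `Yᴴ (T + δ)⁻¹ Y = Sᴴ P⁻¹ S - δ (P⁻¹ S)ᴴ (AᴴA + δ P⁻¹)⁻¹ (P⁻¹ S)`.
The subtracted term is positive semidefinite, and it tends to `0` as `δ → 0⁺` because `AᴴA` is
invertible; so the supremum over `δ > 0` is `tr (Sᴴ P⁻¹ S) = ∑ k, ‖s k‖² / p k`. -/

open Filter Topology

section Algebra

variable {m n R K : Type*} [Fintype m] [DecidableEq m] [Fintype n] [DecidableEq n]
  [CommRing K] [CommSemiring R] [Algebra R K]

theorem Matrix.mul_inv_add_smul_one_mul (A : Matrix m n K) (C : Matrix n m K) (P : Matrix n n K)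
    (c : R) (hP : IsUnit P.det) (hD : IsUnit (A * P * C + c • (1 : Matrix m m K)).det)
    (hB : IsUnit (C * A + c • P⁻¹).det) :
    C * (A * P * C + c • (1 : Matrix m m K))⁻¹ * A =
      P⁻¹ - c • (P⁻¹ * (C * A + c • P⁻¹)⁻¹ * P⁻¹) := by
  set D := A * P * C + c • (1 : Matrix m m K)
  set B := C * A + c • P⁻¹
  have hDA : D * A = A * P * B := by
    simp only [D, B, Matrix.add_mul, Matrix.mul_add, Matrix.smul_mul, Matrix.mul_smul,
      Matrix.one_mul, Matrix.mul_assoc, Matrix.mul_nonsing_inv _ hP, Matrix.mul_one]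
  have hDinvA : D⁻¹ * A = A * B⁻¹ * P⁻¹ := by
    have hA : A = D * (A * B⁻¹ * P⁻¹) := by
      rw [← Matrix.mul_assoc, ← Matrix.mul_assoc, hDA, Matrix.mul_assoc _ B,
        Matrix.mul_nonsing_inv _ hB, Matrix.mul_one, Matrix.mul_assoc,
        Matrix.mul_nonsing_inv _ hP, Matrix.mul_one]
    conv_lhs => rw [hA]
    exact Matrix.nonsing_inv_mul_cancel_left _ _ hD
  have hCA : C * A = B - c • P⁻¹ := (add_sub_cancel_right _ _).symm
  calc C * D⁻¹ * A = C * A * B⁻¹ * P⁻¹ := by simp only [Matrix.mul_assoc, hDinvA]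
    _ = P⁻¹ - c • (P⁻¹ * B⁻¹ * P⁻¹) := by
      rw [hCA, Matrix.sub_mul, Matrix.mul_nonsing_inv _ hB, Matrix.sub_mul, Matrix.one_mul,
        Matrix.smul_mul, Matrix.smul_mul]

end Algebra

theorem atom_apply_eq_pow (N : ℕ) (f : ℝ) (n : Fin N) :
    atom N f n = Complex.exp (2 * Real.pi * f * Complex.I) ^ (n : ℕ) := by
  rw [atom, ← Complex.exp_nat_mul]
  ring_nf

theorem injOn_exp_two_pi_mul_I :
    Set.InjOn (fun f : ℝ => Complex.exp (2 * Real.pi * f * Complex.I)) (Set.Ico 0 1) := by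
  intro x hx y hy hxy
  have hpi : 0 < 2 * Real.pi := by positivity
  have hscale : ∀ t ∈ Set.Ico (0 : ℝ) 1, 2 * Real.pi * t ∈ Set.Ico 0 (2 * Real.pi) :=
    fun t ht => ⟨mul_nonneg hpi.le ht.1, by nlinarith [ht.2]⟩
  have h := Circle.exp_injOn_Ico (by simp) (hscale x hx) (hscale y hy)
    (Circle.ext (by simpa [Circle.coe_exp] using hxy))
  simpa [hpi.ne'] using h

theorem Matrix.mulVec_injective_of_pow {K : Type*} [Field K] {N r : ℕ} (hr : r ≤ N)
    {z : Fin r → K} (hz : Function.Injective z) :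
    Function.Injective (of fun (n : Fin N) (k : Fin r) => z k ^ (n : ℕ)).mulVec := by
  rw [← Matrix.coe_mulVecLin, injective_iff_map_eq_zero]
  intro x hx
  refine eq_zero_of_forall_pow_sum_mul_pow_eq_zero hz fun i => ?_
  simpa [mulVec, dotProduct, mul_comm] using congrFun hx (Fin.castLE hr i)

theorem csSup_eq_of_forall_le_of_tendsto_nhdsGT {g : ℝ → ℝ} {C : ℝ}
    (hle : ∀ δ, 0 < δ → g δ ≤ C) (hlim : Tendsto g (𝓝[>] 0) (𝓝 C)) :
    sSup {t | ∃ δ, 0 < δ ∧ t = g δ} = C := by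
  refine IsLUB.csSup_eq ⟨?_, fun b hb => ?_⟩ ⟨g 1, 1, one_pos, rfl⟩
  · rintro t ⟨δ, hδ, rfl⟩
    exact hle δ hδ
  · exact le_of_tendsto hlim (eventually_nhdsWithin_of_forall fun δ hδ => hb ⟨δ, hδ, rfl⟩)

section Regularization

variable {m : Type*} [Fintype m] [DecidableEq m] {N L : ℕ}

theorem posDef_conjTranspose_mul_self_add_smul_inv {A : Matrix (Fin N) m ℂ}
    (hA : Function.Injective A.mulVec) {P : Matrix m m ℂ} (hP : P.PosDef) {δ : ℝ} (hδ : 0 ≤ δ) :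
    (Aᴴ * A + δ • P⁻¹).PosDef :=
  (PosDef.conjTranspose_mul_self A hA).add_posSemidef (hP.inv.posSemidef.smul hδ)

theorem regularized_trace_eq (A : Matrix (Fin N) m ℂ) (hA : Function.Injective A.mulVec)
    {P : Matrix m m ℂ} (hP : P.PosDef) (S : Matrix m (Fin L) ℂ) {δ : ℝ} (hδ : 0 < δ) :
    ((A * S)ᴴ * (A * P * Aᴴ + δ • 1)⁻¹ * (A * S)).trace.re =
      (Sᴴ * P⁻¹ * S).trace.re -
        δ * ((P⁻¹ * S)ᴴ * (Aᴴ * A + δ • P⁻¹)⁻¹ * (P⁻¹ * S)).trace.re := by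
  have hD : (A * P * Aᴴ + δ • 1).PosDef :=
    PosDef.posSemidef_add (hP.posSemidef.mul_mul_conjTranspose_same A) (.smul .one hδ)
  have hB := posDef_conjTranspose_mul_self_add_smul_inv hA hP hδ.le
  have key := Matrix.mul_inv_add_smul_one_mul A Aᴴ P δ
    ((isUnit_iff_isUnit_det _).mp hP.isUnit)
    ((isUnit_iff_isUnit_det _).mp hD.isUnit) ((isUnit_iff_isUnit_det _).mp hB.isUnit)
  have hPinv : (P⁻¹)ᴴ = P⁻¹ := hP.isHermitian.inv.eq
  calc ((A * S)ᴴ * (A * P * Aᴴ + δ • 1)⁻¹ * (A * S)).trace.re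
      = (Sᴴ * (Aᴴ * (A * P * Aᴴ + δ • 1)⁻¹ * A) * S).trace.re := by
        simp only [conjTranspose_mul, Matrix.mul_assoc]
    _ = _ := by
        rw [key, Matrix.mul_sub, Matrix.sub_mul, trace_sub, Complex.sub_re, Matrix.mul_smul,
          Matrix.smul_mul, trace_smul, Complex.smul_re, smul_eq_mul]
        simp only [conjTranspose_mul, hPinv, Matrix.mul_assoc]

theorem continuousAt_trace_re_inv_add_smul {n : Type*} [Fintype n] [DecidableEq n]
    {M : Matrix m m ℂ} (hM : IsUnit M.det) (E : Matrix m m ℂ) (W : Matrix m n ℂ) :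
    ContinuousAt (fun δ : ℝ => (Wᴴ * (M + δ • E)⁻¹ * W).trace.re) 0 := by
  have hinv : ContinuousAt Inv.inv (M + (0 : ℝ) • E) := by
    rw [zero_smul, add_zero]
    exact continuousAt_matrix_inv M (hM.unit_spec ▸ NormedRing.inverse_continuousAt hM.unit)
  have hsandwich : Continuous fun X : Matrix m m ℂ => (Wᴴ * X * W).trace.re :=
    Complex.continuous_re.comp
      ((continuous_const.matrix_mul continuous_id).matrix_mul continuous_const).matrix_trace
  have hpath : Continuous fun δ : ℝ => M + δ • E :=
    continuous_const.add (continuous_id.smul continuous_const)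
  exact hsandwich.continuousAt.comp (hinv.comp (f := fun δ : ℝ => M + δ • E) hpath.continuousAt)

theorem qtrace_mul_mul_conjTranspose (A : Matrix (Fin N) m ℂ) (hA : Function.Injective A.mulVec)
    {P : Matrix m m ℂ} (hP : P.PosDef) (S : Matrix m (Fin L) ℂ) :
    qtrace N L (A * P * Aᴴ) (A * S) = (Sᴴ * P⁻¹ * S).trace.re := by
  set W := P⁻¹ * S
  set q : ℝ → ℝ := fun δ => (Wᴴ * (Aᴴ * A + δ • P⁻¹)⁻¹ * W).trace.re
  have hq_nonneg : ∀ δ, 0 ≤ δ → 0 ≤ q δ := fun δ hδ =>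
    (Complex.nonneg_iff.mp ((posDef_conjTranspose_mul_self_add_smul_inv hA hP hδ).inv.posSemidef
      |>.conjTranspose_mul_mul_same W |>.trace_nonneg)).1
  have hq_cont : ContinuousAt q 0 := continuousAt_trace_re_inv_add_smul
    ((isUnit_iff_isUnit_det _).mp (PosDef.conjTranspose_mul_self A hA).isUnit) P⁻¹ W
  have hlim : Tendsto (fun δ => δ * q δ) (𝓝[>] 0) (𝓝 0) := by
    have hcont : ContinuousAt (fun δ => δ * q δ) 0 := continuousAt_id.mul hq_cont
    simpa using hcont.tendsto.mono_left nhdsWithin_le_nhds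
  refine csSup_eq_of_forall_le_of_tendsto_nhdsGT (fun δ hδ => ?_) ?_
  · rw [regularized_trace_eq A hA hP S hδ]
    exact sub_le_self _ (mul_nonneg hδ.le (hq_nonneg δ hδ.le))
  · refine (tendsto_congr' ?_).mpr (by simpa using tendsto_const_nhds.sub hlim)
    filter_upwards [self_mem_nhdsWithin] with δ hδ
    exact regularized_trace_eq A hA hP S hδ

end Regularization

theorem Matrix.sum_vecMulVec {ι m n α : Type*} [Fintype ι] [NonUnitalNonAssocSemiring α]
    (a : ι → m → α) (b : ι → n → α) :
    ∑ k, vecMulVec (a k) (b k) = (of fun i k => a k i) * of b := by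
  ext i j
  simp [Matrix.sum_apply, Matrix.mul_apply, vecMulVec_apply]

theorem Matrix.trace_re_conjTranspose_mul_diagonal_mul {m n : Type*} [Fintype m] [DecidableEq m]
    [Fintype n] (d : m → ℝ) (S : Matrix m n ℂ) :
    (Sᴴ * diagonal (fun k => (d k : ℂ)) * S).trace.re = ∑ k, d k * ∑ j, ‖S k j‖ ^ 2 := by
  rw [Matrix.mul_assoc]
  simp only [trace, diag, mul_apply, ↓diagonal_mul, conjTranspose_apply, Complex.re_sum,
    Finset.mul_sum]
  rw [Finset.sum_comm]
  refine Finset.sum_congr rfl fun k _ => Finset.sum_congr rfl fun j _ => ?_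
  rw [mul_left_comm, Complex.star_def, ← mul_assoc, mul_assoc, Complex.conj_mul',
    ← Complex.ofReal_pow, ← Complex.ofReal_mul, Complex.ofReal_re]

theorem Matrix.inv_diagonal_of_ne_zero {n K : Type*} [Fintype n] [DecidableEq n] [Field K]
    {d : n → K} (hd : ∀ k, d k ≠ 0) : (diagonal d)⁻¹ = diagonal d⁻¹ :=
  inv_eq_left_inv <| by
    rw [diagonal_mul_diagonal, ← diagonal_one]
    exact congrArg diagonal (funext fun k => inv_mul_cancel₀ (hd k))

noncomputable def atomMatrix (N : ℕ) {r : ℕ} (f : Fin r → ℝ) : Matrix (Fin N) (Fin r) ℂ :=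
  of fun n k => atom N (f k) n

theorem atomMatrix_mulVec_injective {N r : ℕ} (hr : r ≤ N) {f : Fin r → ℝ}
    (hrange : ∀ k, f k ∈ Set.Ico (0 : ℝ) 1) (hinj : Function.Injective f) :
    Function.Injective (atomMatrix N f).mulVec := by
  have hA : atomMatrix N f =
      of fun (n : Fin N) k => Complex.exp (2 * Real.pi * f k * Complex.I) ^ (n : ℕ) := by
    ext n k
    exact atom_apply_eq_pow N (f k) n
  rw [hA]
  exact mulVec_injective_of_pow hr <| injOn_exp_two_pi_mul_I.injective.comp
    (f := Set.codRestrict f _ hrange) fun a b h => hinj (congrArg Subtype.val h)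

theorem sum_smul_vecMulVec_atom {N r : ℕ} (f : Fin r → ℝ) (p : Fin r → ℝ) :
    ∑ k, ((p k : ℝ) : ℂ) • vecMulVec (atom N (f k)) (star (atom N (f k))) =
      atomMatrix N f * diagonal (fun k => (p k : ℂ)) * (atomMatrix N f)ᴴ := by
  simp_rw [← vecMulVec_smul, Matrix.sum_vecMulVec, Matrix.mul_assoc]
  congr 1
  ext k n
  simp [atomMatrix, diagonal_mul]

theorem trace_quadform_vandermonde_general (N L r : ℕ) (hr : r ≤ N) (u : Fin N → ℂ)
    (f : Fin r → ℝ) (hrange : ∀ k, f k ∈ Set.Ico (0:ℝ) 1)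
    (hinj : Function.Injective f) (p : Fin r → ℝ) (hp : ∀ k, 0 < p k)
    (hdec : Toep N u = ∑ k, ((p k : ℝ) : ℂ) •
      vecMulVec (atom N (f k)) (star (atom N (f k))))
    (Y : Matrix (Fin N) (Fin L) ℂ) (s : Fin r → (Fin L → ℂ))
    (hY : Y = ∑ k, vecMulVec (atom N (f k)) (s k)) :
    qtrace N L (Toep N u) Y = ∑ k, (l2 (s k)) ^ 2 / p k := by
  have hP : (diagonal fun k => (p k : ℂ)).PosDef :=
    PosDef.diagonal fun k => Complex.zero_lt_real.mpr (hp k)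
  have hPinv : (diagonal fun k => (p k : ℂ))⁻¹ = diagonal fun k => (((p k)⁻¹ : ℝ) : ℂ) := by
    rw [inv_diagonal_of_ne_zero fun k => Complex.ofReal_ne_zero.mpr (hp k).ne']
    simp
  have hYA : Y = atomMatrix N f * of s := hY.trans (Matrix.sum_vecMulVec _ _)
  rw [hdec, sum_smul_vecMulVec_atom, hYA,
    qtrace_mul_mul_conjTranspose _ (atomMatrix_mulVec_injective hr hrange hinj) hP, hPinv,
    trace_re_conjTranspose_mul_diagonal_mul]
  refine Finset.sum_congr rfl fun k _ => ?_
  rw [l2, Real.sq_sqrt (Finset.sum_nonneg fun j _ => sq_nonneg _), inv_mul_eq_div]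
  rfl

theorem trace_quadform_vandermonde (N L r : ℕ) (hr : r ≤ N) (u : Fin N → ℂ)
    (hpsd : (Toep N u).PosSemidef)
    (f : Fin r → ℝ) (hrange : ∀ k, f k ∈ Set.Ico (0:ℝ) 1)
    (hinj : Function.Injective f) (p : Fin r → ℝ) (hp : ∀ k, 0 < p k)
    (hdec : Toep N u = ∑ k, ((p k : ℝ) : ℂ) •
      vecMulVec (atom N (f k)) (star (atom N (f k))))
    (Y : Matrix (Fin N) (Fin L) ℂ) (s : Fin r → (Fin L → ℂ))
    (hY : Y = ∑ k, vecMulVec (atom N (f k)) (s k)) :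
    qtrace N L (Toep N u) Y = ∑ k, (l2 (s k)) ^ 2 / p k :=
  trace_quadform_vandermonde_general N L r hr u f hrange hinj p hp hdec Y s hY
end

section
/- Let (u_ε)_{ε>0} be a family in ℂ^N with T(u_ε) Hermitian PSD and uniformly bounded, and let u_0 be a cluster point as ε → 0⁺. If for every ε the columns of a fixed matrix Y ∈ ℂ^{N×L} lie in the range of T(u_ε) and tr(Y^H T(u_ε)^† Y) is uniformly bounded, then the columns of Y lie in the range of T(u_0). -/
open Matrix Filter Topology ComplexOrder

/-!
Let `y` be a column of `Y` and `v` a vector with `vᴴ T(u₀) = 0`. For `ε, δ > 0` put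
`A = T(u_ε) + δI`. Cauchy–Schwarz for the positive definite form `A` gives
`|vᴴy|² ≤ (vᴴAv)(yᴴA⁻¹y)`, and since `y = T(u_ε)x` and `T(u_ε) ≤ A`, the regularized forms
`yᴴA⁻¹y` are bounded by `xᴴT(u_ε)x`; hence they lie below `qtrace ≤ C`. The inequality
`|vᴴy|² ≤ (vᴴAv) C` is closed in `u_ε`, so it passes to the cluster point `u₀`, where
`vᴴ(T(u₀) + δI)v = δ‖v‖²`. Letting `δ → 0` gives `vᴴy = 0`, so `y` lies in the range of `T(u₀)`.
-/

namespace Matrix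

variable {𝕜 : Type*} [RCLike 𝕜] {n : Type*} [Fintype n]

open RCLike

theorem exists_mulVec_eq_of_forall_vecMul_eq_zero {K : Type*} [Field K] {m : Type*} [Fintype m]
    (M : Matrix m n K) (y : m → K) (h : ∀ c, c ᵥ* M = 0 → c ⬝ᵥ y = 0) :
    ∃ x, M *ᵥ x = y := by
  classical
  suffices y ∈ LinearMap.range M.mulVecLin from this
  rw [← Subspace.forall_mem_dualAnnihilator_apply_eq_zero_iff]
  intro φ hφ
  have hφ_apply : ∀ w, φ w = (fun i => φ (Pi.single i 1)) ⬝ᵥ w := fun w => by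
    conv_lhs => rw [pi_eq_sum_univ' w, map_sum]
    simp [dotProduct, mul_comm]
  rw [hφ_apply]
  refine h _ (funext fun j => ?_)
  rw [vecMul, ← hφ_apply]
  exact (Submodule.mem_dualAnnihilator _).mp hφ _ ⟨Pi.single j 1, by ext; simp [mulVec_single]⟩

theorem re_star_dotProduct_comm (a b : n → 𝕜) : re (star a ⬝ᵥ b) = re (star b ⬝ᵥ a) := by
  rw [star_dotProduct, star_def, conj_re]

theorem trace_conjTranspose_mul_mul {m : Type*} [Fintype m] (A : Matrix n n 𝕜)
    (Y : Matrix n m 𝕜) :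
    (Yᴴ * A * Y).trace = ∑ l, star (fun i => Y i l) ⬝ᵥ (A *ᵥ fun i => Y i l) := by
  rw [Matrix.mul_assoc]
  rfl

theorem PosSemidef.norm_dotProduct_mulVec_sq_le {M : Matrix n n 𝕜} (hM : M.PosSemidef)
    (a b : n → 𝕜) :
    ‖star a ⬝ᵥ (M *ᵥ b)‖ ^ 2 ≤ re (star a ⬝ᵥ (M *ᵥ a)) * re (star b ⬝ᵥ (M *ᵥ b)) := by
  let := M.toSeminormedAddCommGroup hM
  let := M.toInnerProductSpace hM
  have h := inner_mul_inner_self_le (𝕜 := 𝕜) a b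
  rw [norm_inner_symm b a, ← sq] at h
  change ‖(M *ᵥ b) ⬝ᵥ star a‖ ^ 2 ≤ re ((M *ᵥ a) ⬝ᵥ star a) * re ((M *ᵥ b) ⬝ᵥ star b) at h
  simpa only [dotProduct_comm _ (star _)] using h

variable [DecidableEq n]

theorem PosDef.mulVec_inv_mulVec {A : Matrix n n 𝕜} (hA : A.PosDef) (y : n → 𝕜) :
    A *ᵥ (A⁻¹ *ᵥ y) = y := by
  rw [mulVec_mulVec, mul_nonsing_inv _ ((isUnit_iff_isUnit_det A).mp hA.isUnit), one_mulVec]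

theorem PosDef.re_dotProduct_inv_mulVec {A : Matrix n n 𝕜} (hA : A.PosDef) (y : n → 𝕜) :
    re (star y ⬝ᵥ (A⁻¹ *ᵥ y)) = re (star (A⁻¹ *ᵥ y) ⬝ᵥ (A *ᵥ (A⁻¹ *ᵥ y))) := by
  rw [hA.mulVec_inv_mulVec, re_star_dotProduct_comm]

theorem PosDef.norm_dotProduct_sq_le {A : Matrix n n 𝕜} (hA : A.PosDef) (v y : n → 𝕜) :
    ‖star v ⬝ᵥ y‖ ^ 2 ≤ re (star v ⬝ᵥ (A *ᵥ v)) * re (star y ⬝ᵥ (A⁻¹ *ᵥ y)) := by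
  rw [hA.re_dotProduct_inv_mulVec]
  conv_lhs => rw [← hA.mulVec_inv_mulVec y]
  exact hA.posSemidef.norm_dotProduct_mulVec_sq_le v _

/-- For `T ≤ A` this says `A⁻¹ ≤ T†` on the range of `T`. -/
theorem PosDef.re_dotProduct_inv_mulVec_le {A T : Matrix n n 𝕜} (hA : A.PosDef)
    (hT : T.PosSemidef) (hTA : (A - T).PosSemidef) {x y : n → 𝕜} (hxy : T *ᵥ x = y) :
    re (star y ⬝ᵥ (A⁻¹ *ᵥ y)) ≤ re (star x ⬝ᵥ (T *ᵥ x)) := by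
  set s := A⁻¹ *ᵥ y
  set q := re (star y ⬝ᵥ s)
  have hq_nonneg : 0 ≤ q := hA.inv.posSemidef.re_dotProduct_nonneg y
  have hq_eq : q = re (star s ⬝ᵥ (T *ᵥ x)) := by
    rw [hxy, re_star_dotProduct_comm]
  have hsTs : re (star s ⬝ᵥ (T *ᵥ s)) ≤ q := by
    have := hTA.re_dotProduct_nonneg s
    rw [sub_mulVec, dotProduct_sub, map_sub, ← hA.re_dotProduct_inv_mulVec] at this
    linarith
  have : q ^ 2 ≤ q * re (star x ⬝ᵥ (T *ᵥ x)) := calc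
    q ^ 2 ≤ ‖star s ⬝ᵥ (T *ᵥ x)‖ ^ 2 := by
      rw [hq_eq]; exact sq_le_sq' (neg_le_of_abs_le (abs_re_le_norm _)) (re_le_norm _)
    _ ≤ re (star s ⬝ᵥ (T *ᵥ s)) * re (star x ⬝ᵥ (T *ᵥ x)) := hT.norm_dotProduct_mulVec_sq_le s x
    _ ≤ q * re (star x ⬝ᵥ (T *ᵥ x)) := by gcongr; exact hT.re_dotProduct_nonneg x
  nlinarith [hT.re_dotProduct_nonneg x]

end Matrix

@[fun_prop]
theorem continuous_Toep (N : ℕ) : Continuous (Toep N) :=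
  continuous_matrix fun j k => by
    simp only [Toep, of_apply]
    split_ifs
    · exact continuous_apply _
    · exact Complex.continuous_conj.comp (continuous_apply _)

theorem le_qtrace {N L : ℕ} {T : Matrix (Fin N) (Fin N) ℂ} (hT : T.PosSemidef)
    {Y : Matrix (Fin N) (Fin L) ℂ} (hY : ∀ l, ∃ x, T *ᵥ x = fun i => Y i l) {δ : ℝ} (hδ : 0 < δ)
    (l : Fin L) :
    (star (fun i => Y i l) ⬝ᵥ ((T + δ • 1)⁻¹ *ᵥ fun i => Y i l)).re ≤ qtrace N L T Y := by
  choose x hx using hY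
  -- Without this bound the `sSup` in `qtrace` would be the junk value `0`.
  have hbdd : BddAbove {t : ℝ | ∃ δ : ℝ, 0 < δ ∧
      t = (Yᴴ * (T + δ • (1 : Matrix (Fin N) (Fin N) ℂ))⁻¹ * Y).trace.re} := by
    refine ⟨∑ l, (star (x l) ⬝ᵥ (T *ᵥ x l)).re, ?_⟩
    rintro _ ⟨δ, hδ, rfl⟩
    rw [trace_conjTranspose_mul_mul, Complex.re_sum]
    refine Finset.sum_le_sum fun l _ => ?_
    refine (PosDef.posSemidef_add hT (PosDef.one.smul hδ)).re_dotProduct_inv_mulVec_le hT ?_ (hx l)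
    simpa using PosSemidef.one.smul hδ.le
  calc _ ≤ (Yᴴ * (T + δ • 1)⁻¹ * Y).trace.re := by
        rw [trace_conjTranspose_mul_mul, Complex.re_sum]
        exact Finset.single_le_sum
          (f := fun l => (star (fun i => Y i l) ⬝ᵥ ((T + δ • 1)⁻¹ *ᵥ fun i => Y i l)).re)
          (fun l _ => (hT.add (PosSemidef.one.smul hδ.le)).inv.re_dotProduct_nonneg _)
          (Finset.mem_univ l)
    _ ≤ qtrace N L T Y := le_csSup hbdd ⟨δ, hδ, rfl⟩

theorem norm_star_dotProduct_sq_le_of_qtrace_le {N L : ℕ} {T : Matrix (Fin N) (Fin N) ℂ}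
    (hT : T.PosSemidef) {Y : Matrix (Fin N) (Fin L) ℂ} (hY : ∀ l, ∃ x, T *ᵥ x = fun i => Y i l)
    {C : ℝ} (hC : qtrace N L T Y ≤ C) {δ : ℝ} (hδ : 0 < δ) (v : Fin N → ℂ) (l : Fin L) :
    ‖star v ⬝ᵥ fun i => Y i l‖ ^ 2 ≤ (star v ⬝ᵥ ((T + δ • 1) *ᵥ v)).re * C := by
  have hA := PosDef.posSemidef_add hT (PosDef.one.smul hδ)
  have hvAv := hA.posSemidef.re_dotProduct_nonneg v
  calc _ ≤ (star v ⬝ᵥ ((T + δ • 1) *ᵥ v)).re * qtrace N L T Y :=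
        (hA.norm_dotProduct_sq_le v _).trans
          (mul_le_mul_of_nonneg_left (le_qtrace hT hY hδ l) hvAv)
    _ ≤ _ := mul_le_mul_of_nonneg_left hC hvAv

theorem range_closure_at_cluster_point_general (N L : ℕ)
    (u : ℝ → (Fin N → ℂ)) (u₀ : Fin N → ℂ)
    (hpsd : ∀ ε : ℝ, 0 < ε → (Toep N (u ε)).PosSemidef)
    (hcluster : MapClusterPt u₀ (nhdsWithin 0 (Set.Ioi 0)) u)
    (Y : Matrix (Fin N) (Fin L) ℂ)
    (hrange : ∀ ε : ℝ, 0 < ε → ∀ l : Fin L,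
      ∃ x : Fin N → ℂ, Toep N (u ε) *ᵥ x = fun i => Y i l)
    (hq : ∃ C : ℝ, ∀ ε : ℝ, 0 < ε → qtrace N L (Toep N (u ε)) Y ≤ C) :
    ∀ l : Fin L, ∃ x : Fin N → ℂ, Toep N u₀ *ᵥ x = fun i => Y i l := by
  intro l
  obtain ⟨C, hC⟩ := hq
  refine exists_mulVec_eq_of_forall_vecMul_eq_zero _ _ fun c hc => ?_
  obtain ⟨v, rfl⟩ : ∃ v, star v = c := ⟨star c, star_star c⟩
  have hbound : ∀ δ : ℝ, 0 < δ →
      ‖star v ⬝ᵥ fun i => Y i l‖ ^ 2 ≤ δ * ((star v ⬝ᵥ v).re * C) := by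
    intro δ hδ
    have hclosed : IsClosed {w | ‖star v ⬝ᵥ fun i => Y i l‖ ^ 2 ≤
        (star v ⬝ᵥ ((Toep N w + δ • 1) *ᵥ v)).re * C} :=
      isClosed_le continuous_const (by fun_prop)
    have h₀ := hclosed.mem_of_mapClusterPt hcluster (eventually_mem_nhdsWithin.mono fun ε hε =>
      norm_star_dotProduct_sq_le_of_qtrace_le (hpsd ε hε) (hrange ε hε) (hC ε hε) hδ v l)
    rwa [Set.mem_ofPred_eq, add_mulVec, dotProduct_add, dotProduct_mulVec, hc, zero_dotProduct,
      zero_add, smul_mulVec, one_mulVec, dotProduct_smul, Complex.smul_re, smul_eq_mul,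
      mul_assoc] at h₀
  have hlim : Tendsto (fun δ : ℝ => δ * ((star v ⬝ᵥ v).re * C)) (𝓝[>] 0) (𝓝 0) :=
    ((continuous_mul_const _).tendsto' 0 0 (zero_mul _)).mono_left nhdsWithin_le_nhds
  have hsq := ge_of_tendsto hlim (eventually_mem_nhdsWithin.mono hbound)
  exact norm_eq_zero.mp (pow_eq_zero_iff two_ne_zero |>.mp (le_antisymm hsq (sq_nonneg _)))

theorem range_closure_at_cluster_point (N L : ℕ)
    (u : ℝ → (Fin N → ℂ)) (u₀ : Fin N → ℂ)
    (hpsd : ∀ ε : ℝ, 0 < ε → (Toep N (u ε)).PosSemidef)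
    (hbdd : ∃ B : ℝ, ∀ ε : ℝ, 0 < ε → ∀ j, ‖u ε j‖ ≤ B)
    (hcluster : MapClusterPt u₀ (nhdsWithin 0 (Set.Ioi 0)) u)
    (Y : Matrix (Fin N) (Fin L) ℂ)
    (hrange : ∀ ε : ℝ, 0 < ε → ∀ l : Fin L,
      ∃ x : Fin N → ℂ, Toep N (u ε) *ᵥ x = fun i => Y i l)
    (hq : ∃ C : ℝ, ∀ ε : ℝ, 0 < ε → qtrace N L (Toep N (u ε)) Y ≤ C) :
    ∀ l : Fin L, ∃ x : Fin N → ℂ, Toep N u₀ *ᵥ x = fun i => Y i l :=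
  range_closure_at_cluster_point_general N L u u₀ hpsd hcluster Y hrange hq
end
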